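/- arXiv:2011.04926 — 4 statements merged into one kernel-verified Lean document; each statement's English description precedes it below -/
import Mathlib

section
/- Under Assumptions 1, 2, 3 on h1 and h2, the separable-GAN loss satisfies: for every Y ∈ (ℝ^d)^n, g_SP(Y) ≥ (1/2)·ξ(1) = (1/2)·sup_{t∈ℝ}(h1(t) + h2(−t)), and equality holds if and only if there exists a permutation σ of {1,…,n} such that y_i = x_{σ(i)} for all i (i.e., the multiset {y_1,…,y_n} equals {x_1,…,x_n}). -/
open scoped BigOperators

/-- ξ(m) = sup_{t∈ℝ} (h1(t) + m·h2(−t)). -/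
noncomputable def xi (h1 h2 : ℝ → ℝ) (m : ℕ) : ℝ :=
  sSup {s : ℝ | ∃ t : ℝ, s = h1 t + (m : ℝ) * h2 (-t)}

/-- The separable-GAN loss
g_SP(Y) = (1/(2n)) · sup over continuous f of Σ_i [h1(f(x_i)) + h2(−f(y_i))]. -/
noncomputable def gSP {d n : ℕ} (h1 h2 : ℝ → ℝ)
    (x Y : Fin n → EuclideanSpace ℝ (Fin d)) : ℝ :=
  (1 / (2 * (n : ℝ))) * sSup {s : ℝ |
    ∃ f : EuclideanSpace ℝ (Fin d) → ℝ, Continuous f ∧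
      s = ∑ i, (h1 (f (x i)) + h2 (-(f (Y i))))}

/-! Only the values of `f` at the finitely many points `x i`, `Y j` matter, and by Tietze every
choice of values there is realised by a continuous `f`; so the supremum splits into one
supremum per point. The point `x i` contributes `ξ(mᵢ)`, where `mᵢ = #{j | Y j = x i}`, and a
point hit only by the `Y j` contributes `sup_t b · h2(-t) = 0`. Hence `2n · g_SP(Y) = ∑ ξ(mᵢ)`.
Now `∑ mᵢ ≤ n`, `ξ(1) < ξ(0) = 0` and `ξ(m) ≥ m ξ(1)`, strictly for `m ≥ 2`, give
`∑ ξ(mᵢ) ≥ n ξ(1)`, with equality exactly when every `mᵢ = 1`, i.e. when `Y` permutes `x`. -/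

open Finset Set Function
open scoped Pointwise

theorem IsLUB.finsetSum {ι G : Type*} [AddCommGroup G] [PartialOrder G] [IsOrderedAddMonoid G]
    (s : Finset ι) {S : ι → Set G} {c : ι → G} (h : ∀ i ∈ s, IsLUB (S i) (c i)) :
    IsLUB (∑ i ∈ s, S i) (∑ i ∈ s, c i) := by
  classical
  induction s using Finset.induction_on with
  | empty => exact isLUB_singleton
  | insert a s ha ih =>
    rw [sum_insert ha, sum_insert ha]
    exact (h a (mem_insert_self a s)).add (ih fun i hi => h i (mem_insert_of_mem hi))

theorem exists_continuous_eqOn_of_finite {X : Type*} [TopologicalSpace X] [T1Space X]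
    [NormalSpace X] {s : Set X} (hs : s.Finite) (v : X → ℝ) :
    ∃ f : X → ℝ, Continuous f ∧ EqOn f v s := by
  have : Finite s := hs
  obtain ⟨g, hg⟩ := ContinuousMap.exists_restrict_eq hs.isClosed
    ⟨s.domRestrict v, continuous_of_discreteTopology⟩
  exact ⟨g, g.continuous, fun p hp => congrFun (congrArg (⇑) hg) ⟨p, hp⟩⟩

theorem isLUB_continuous_finsetSum {X : Type*} [TopologicalSpace X] [T1Space X]
    [NormalSpace X] (Q : Finset X) {φ : X → ℝ → ℝ} {c : X → ℝ}
    (h : ∀ p ∈ Q, IsLUB (range (φ p)) (c p)) :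
    IsLUB {r | ∃ f : X → ℝ, Continuous f ∧ r = ∑ p ∈ Q, φ p (f p)} (∑ p ∈ Q, c p) := by
  suffices {r | ∃ f : X → ℝ, Continuous f ∧ r = ∑ p ∈ Q, φ p (f p)} = ∑ p ∈ Q, range (φ p) by
    rw [this]; exact IsLUB.finsetSum Q h
  ext r
  rw [mem_finsetSum]
  constructor
  · rintro ⟨f, -, rfl⟩
    exact ⟨fun p => φ p (f p), fun _ => mem_range_self _, rfl⟩
  · rintro ⟨g, hg, rfl⟩
    choose! t ht using fun p (hp : p ∈ Q) => hg hp
    obtain ⟨f, hf, hft⟩ := exists_continuous_eqOn_of_finite Q.finite_toSet t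
    exact ⟨f, hf, sum_congr rfl fun p hp => by rw [hft hp, ht p hp]⟩

theorem sum_comp_eq_sum_card_fiber_smul {ι E M : Type*} [Fintype ι] [DecidableEq E]
    [AddCommMonoid M] {y : ι → E} {Q : Finset E} (hy : ∀ j, y j ∈ Q) (g : E → M) :
    ∑ j, g (y j) = ∑ p ∈ Q, #{j | y j = p} • g p := by
  rw [← sum_fiberwise_of_maps_to (fun j _ => hy j)]
  refine sum_congr rfl fun p _ => ?_
  rw [sum_congr rfl fun j hj => by rw [(mem_filter.1 hj).2], sum_const]

theorem sum_card_fiber_le {ι E : Type*} [Fintype ι] [DecidableEq E] {x : ι → E}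
    (hx : Injective x) (y : ι → E) : ∑ i, #{j | y j = x i} ≤ Fintype.card ι := by
  rw [← sum_image (f := fun p => #{j | y j = p}) fun i _ j _ h => hx h,
    sum_card_fiberwise_eq_card_filter]
  exact card_filter_le _ _

theorem exists_perm_iff_card_fiber_eq_one {ι E : Type*} [Fintype ι] [DecidableEq E]
    {x : ι → E} (hx : Injective x) (y : ι → E) :
    (∃ σ : Equiv.Perm ι, ∀ j, y j = x (σ j)) ↔ ∀ i, #{j | y j = x i} = 1 := by
  constructor
  · rintro ⟨σ, hσ⟩ i
    rw [card_eq_one]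
    exact ⟨σ.symm i, by ext j; simp [hσ, hx.eq_iff, Equiv.eq_symm_apply]⟩
  · intro h
    choose τ hτ using fun i => card_eq_one.1 (h i)
    have hxτ : ∀ i, y (τ i) = x i := fun i => by
      have := mem_singleton_self (τ i)
      rw [← hτ i, mem_filter] at this
      exact this.2
    have hτinj : Injective τ := fun i i' hii' => hx (by rw [← hxτ, hii', hxτ])
    let e := Equiv.ofBijective τ hτinj.bijective_of_finite
    exact ⟨e.symm, fun j => by rw [← hxτ]; exact congrArg y (e.apply_symm_apply j).symm⟩

theorem natCast_mul_le_sum_and_eq_iff {n : ℕ} {ξ : ℕ → ℝ} (h0 : ξ 0 = 0) (h1 : ξ 1 < 0)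
    (h2 : ∀ m, 2 ≤ m → m ≤ n → m * ξ 1 < ξ m) {m : Fin n → ℕ} (hm : ∑ i, m i ≤ n) :
    n * ξ 1 ≤ ∑ i, ξ (m i) ∧ (∑ i, ξ (m i) = n * ξ 1 ↔ ∀ i, m i = 1) := by
  have hmn : ∀ i, m i ≤ n := fun i =>
    (single_le_sum (fun _ _ => Nat.zero_le _) (mem_univ i)).trans hm
  have hterm : ∀ i, m i * ξ 1 ≤ ξ (m i) := fun i => by
    rcases Nat.lt_or_ge (m i) 2 with hlt | hge
    · interval_cases m i <;> simp [h0]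
    · exact (h2 _ hge (hmn i)).le
  have hcount : n * ξ 1 ≤ (∑ i, m i : ℕ) * ξ 1 :=
    mul_le_mul_of_nonpos_right (by exact_mod_cast hm) h1.le
  have hsum : (∑ i, m i : ℕ) * ξ 1 ≤ ∑ i, ξ (m i) := by
    push_cast; rw [sum_mul]; exact sum_le_sum fun i _ => hterm i
  refine ⟨hcount.trans hsum, fun heq => ?_, fun h => by simp [h]⟩
  have hsum_eq : ∑ i, m i = n := by
    by_contra hne
    have : (∑ i, m i : ℕ) < (n : ℝ) := by exact_mod_cast lt_of_le_of_ne hm hne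
    nlinarith
  have hle1 : ∀ i, m i ≤ 1 := by
    have hgap : ∑ i, (ξ (m i) - m i * ξ 1) = 0 := by
      have hsum_eq' : ∑ i, (m i : ℝ) = n := by exact_mod_cast hsum_eq
      rw [sum_sub_distrib, ← sum_mul, heq, hsum_eq', sub_self]
    intro i
    by_contra! hi
    have := (sum_eq_zero_iff_of_nonneg fun i _ => sub_nonneg.2 (hterm i)).1 hgap i (mem_univ i)
    linarith [h2 _ hi (hmn i)]
  have hall := (sum_eq_sum_iff_of_le (s := univ) (g := fun _ => 1) fun i _ => hle1 i).1
    (by simpa using hsum_eq)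
  exact fun i => hall i (mem_univ i)

section Loss

variable {h1 h2 : ℝ → ℝ}

theorem isLUB_xi (hh1 : ∀ t, h1 t ≤ 0) (hh2 : ∀ t, h2 t ≤ 0) (m : ℕ) :
    IsLUB (range fun t => h1 t + m * h2 (-t)) (xi h1 h2 m) := by
  have hset : {s : ℝ | ∃ t, s = h1 t + m * h2 (-t)} = range fun t => h1 t + m * h2 (-t) := by
    ext; simp [eq_comm]
  rw [xi, hset]
  refine isLUB_csSup (range_nonempty _) ⟨0, ?_⟩
  rintro _ ⟨t, rfl⟩
  have := mul_nonpos_of_nonneg_of_nonpos (Nat.cast_nonneg m) (hh2 (-t))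
  linarith [hh1 t]

theorem xi_zero (A1a : IsLUB (range h1) 0) (hh2 : ∀ t, h2 t ≤ 0) : xi h1 h2 0 = 0 :=
  (isLUB_xi (fun t => A1a.1 (mem_range_self t)) hh2 0).unique (by simpa using A1a)

theorem isLUB_range_natCast_mul_comp_neg (A1b : IsLUB (range h2) 0) (b : ℕ) :
    IsLUB (range fun t => b * h2 (-t)) 0 := by
  have := A1b.mul_left (Nat.cast_nonneg b)
  rwa [mul_zero, ← range_comp, ← neg_surjective.range_comp] at this

theorem isLUB_separableGANObjective {ι X : Type*} [Fintype ι] [TopologicalSpace X] [T1Space X]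
    [NormalSpace X] [DecidableEq X] {x : ι → X} (hx : Injective x)
    (hh1 : ∀ t, h1 t ≤ 0) (A1b : IsLUB (range h2) 0) (Y : ι → X) :
    IsLUB {s | ∃ f : X → ℝ, Continuous f ∧ s = ∑ i, (h1 (f (x i)) + h2 (-(f (Y i))))}
      (∑ i, xi h1 h2 #{j | Y j = x i}) := by
  set Q : Finset X := Finset.univ.image x ∪ Finset.univ.image Y
  have hxQ : ∀ i, x i ∈ Q := fun i => by simp [Q]
  have hYQ : ∀ j, Y j ∈ Q := fun j => by simp [Q]
  have hobj : ∀ f : X → ℝ, ∑ i, (h1 (f (x i)) + h2 (-(f (Y i)))) =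
      ∑ p ∈ Q, (#{i | x i = p} • h1 (f p) + #{j | Y j = p} • h2 (-(f p))) := fun f => by
    rw [sum_add_distrib, sum_add_distrib, sum_comp_eq_sum_card_fiber_smul hxQ (fun p => h1 (f p)),
      sum_comp_eq_sum_card_fiber_smul hYQ (fun p => h2 (-(f p)))]
  simp only [hobj]
  rw [sum_comp_eq_sum_card_fiber_smul hxQ (fun p => xi h1 h2 #{j | Y j = p})]
  refine isLUB_continuous_finsetSum Q
    (φ := fun p t => #{i | x i = p} • h1 t + #{j | Y j = p} • h2 (-t)) fun p _ => ?_
  by_cases hp : ∃ i, x i = p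
  · obtain ⟨i, rfl⟩ := hp
    have : #{i' | x i' = x i} = 1 := card_eq_one.2 ⟨i, by ext; simp [hx.eq_iff]⟩
    simpa [this] using isLUB_xi hh1 (fun t => A1b.1 (mem_range_self t)) #{j | Y j = x i}
  · have : #{i | x i = p} = 0 := card_eq_zero.2 (filter_false_of_mem fun i _ => not_exists.1 hp i)
    simpa [this] using isLUB_range_natCast_mul_comp_neg A1b #{j | Y j = p}

end Loss

theorem stmt0_general {d n : ℕ} (hn : 1 ≤ n)
    (x : Fin n → EuclideanSpace ℝ (Fin d)) (hx : Function.Injective x)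
    (h1 h2 : ℝ → ℝ)
    (A1a : IsLUB (Set.range h1) 0) (A1b : IsLUB (Set.range h2) 0)
    (A2 : ∀ m : ℕ, 2 ≤ m → m ≤ n → (m : ℝ) * xi h1 h2 1 < xi h1 h2 m)
    (A3 : ∀ m : ℕ, 1 ≤ m → m ≤ n → xi h1 h2 m < xi h1 h2 (m - 1)) :
    ∀ Y : Fin n → EuclideanSpace ℝ (Fin d),
      (1 / 2) * xi h1 h2 1 ≤ gSP h1 h2 x Y ∧
      (gSP h1 h2 x Y = (1 / 2) * xi h1 h2 1 ↔
        ∃ σ : Equiv.Perm (Fin n), ∀ i, Y i = x (σ i)) := by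
  classical
  intro Y
  have hh1 : ∀ t, h1 t ≤ 0 := fun t => A1a.1 (mem_range_self t)
  have hh2 : ∀ t, h2 t ≤ 0 := fun t => A1b.1 (mem_range_self t)
  have hξ0 : xi h1 h2 0 = 0 := xi_zero A1a hh2
  have hξ1 : xi h1 h2 1 < 0 := hξ0 ▸ A3 1 le_rfl hn
  have hg : gSP h1 h2 x Y = (∑ i, xi h1 h2 #{j | Y j = x i}) / (2 * n) := by
    rw [gSP, (isLUB_separableGANObjective hx hh1 A1b Y).csSup_eq ⟨_, 0, continuous_const, rfl⟩]
    ring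
  obtain ⟨hle, heq⟩ := natCast_mul_le_sum_and_eq_iff hξ0 hξ1 A2
    ((sum_card_fiber_le hx Y).trans_eq (Fintype.card_fin n))
  have hn' : (0 : ℝ) < 2 * n := by positivity
  rw [hg, exists_perm_iff_card_fiber_eq_one hx, ← heq, le_div_iff₀ hn', div_eq_iff hn'.ne']
  constructor
  · linarith
  · constructor <;> intro h <;> linarith

theorem stmt0 {d n : ℕ} (hd : 1 ≤ d) (hn : 1 ≤ n)
    (x : Fin n → EuclideanSpace ℝ (Fin d)) (hx : Function.Injective x)
    (h1 h2 : ℝ → ℝ)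
    (A1a : IsLUB (Set.range h1) 0) (A1b : IsLUB (Set.range h2) 0)
    (A2 : ∀ m : ℕ, 2 ≤ m → m ≤ n → (m : ℝ) * xi h1 h2 1 < xi h1 h2 m)
    (A3 : ∀ m : ℕ, 1 ≤ m → m ≤ n → xi h1 h2 m < xi h1 h2 (m - 1)) :
    ∀ Y : Fin n → EuclideanSpace ℝ (Fin d),
      (1 / 2) * xi h1 h2 1 ≤ gSP h1 h2 x Y ∧
      (gSP h1 h2 x Y = (1 / 2) * xi h1 h2 1 ↔
        ∃ σ : Equiv.Perm (Fin n), ∀ i, Y i = x (σ i)) :=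
  stmt0_general hn x hx h1 h2 A1a A1b A2 A3
end

section
/- Suppose h : ℝ → ℝ is concave with sup_{t∈ℝ} h(t) = 0 and h(0) < 0, and x_1, …, x_n ∈ ℝ^d are distinct. Then the RpGAN loss satisfies g_R(Y) ≥ h(0) for every Y ∈ (ℝ^d)^n, and equality holds if and only if there exists a permutation σ of {1,…,n} such that y_i = x_{σ(i)} for all i (i.e., the multiset {y_1,…,y_n} equals {x_1,…,x_n}). -/
/-!
The constant discriminator `f = 0` shows that the supremum is at least `n · h 0`, and
`h ≤ 0` bounds it above. If the `y_i` are a permutation of the `x_i`, the differences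
`f (x i) - f (y i)` sum to zero for every `f`, so Jensen's inequality caps every value at
`n · h 0`. Otherwise some `x_j` is none of the `y_i`; pick `t₀` with `h 0 < h t₀` (possible
as `h 0 < 0 = sup h`) and an Urysohn bump equal to `t₀` at `x_j` and to `0` at every `y_i`.
Every argument of `h` then lies between `0` and `t₀`, so by concavity no term drops below
`h 0`, while the `j`-th term exceeds it.
-/

open scoped BigOperators

/-- The RpGAN loss g_R(Y) = (1/n) · sup over continuous f of Σ_i h(f(x_i) − f(y_i)). -/
noncomputable def gR {d n : ℕ} (h : ℝ → ℝ)
    (x Y : Fin n → EuclideanSpace ℝ (Fin d)) : ℝ :=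
  (1 / (n : ℝ)) * sSup {s : ℝ |
    ∃ f : EuclideanSpace ℝ (Fin d) → ℝ, Continuous f ∧
      s = ∑ i, h (f (x i) - f (Y i))}

open Finset Function Set

theorem ConcaveOn.sum_le_card_mul_of_sum_eq_zero {ι : Type*} [Fintype ι] [Nonempty ι]
    {h : ℝ → ℝ} (hconc : ConcaveOn ℝ univ h) {t : ι → ℝ} (ht : ∑ i, t i = 0) :
    ∑ i, h (t i) ≤ Fintype.card ι * h 0 := by
  have hcard : (0 : ℝ) < Fintype.card ι := by exact_mod_cast Fintype.card_pos
  have hjensen := hconc.le_map_sum (t := univ) (w := fun _ => (Fintype.card ι : ℝ)⁻¹) (p := t)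
    (fun _ _ => by positivity) (by simp [hcard.ne']) (fun _ _ => mem_univ _)
  simp only [smul_eq_mul, ← mul_sum, ht, mul_zero] at hjensen
  rwa [inv_mul_le_iff₀ hcard] at hjensen

theorem exists_perm_apply_eq_of_range_subset {ι α : Type*} [Finite ι] {x Y : ι → α}
    (hx : Injective x) (hsub : range x ⊆ range Y) : ∃ σ : Equiv.Perm ι, ∀ i, Y i = x (σ i) := by
  choose g hg using fun j => hsub (mem_range_self j)
  have hg_inj : Injective g := fun a b hab => hx (by rw [← hg a, ← hg b, hab])
  let e := Equiv.ofBijective g (Finite.injective_iff_bijective.mp hg_inj)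
  refine ⟨e.symm, fun i => ?_⟩
  simpa only [e, Equiv.ofBijective_apply_symm_apply] using hg (e.symm i)

section DiscriminatorSums

variable {X ι : Type*} [TopologicalSpace X] [Fintype ι]

def discriminatorSums (h : ℝ → ℝ) (x Y : ι → X) : Set ℝ :=
  {s | ∃ f : X → ℝ, Continuous f ∧ s = ∑ i, h (f (x i) - f (Y i))}

theorem card_mul_mem_discriminatorSums (h : ℝ → ℝ) (x Y : ι → X) :
    Fintype.card ι * h 0 ∈ discriminatorSums h x Y :=
  ⟨0, continuous_const, by simp⟩

theorem bddAbove_discriminatorSums {h : ℝ → ℝ} (hle : ∀ t, h t ≤ 0) (x Y : ι → X) :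
    BddAbove (discriminatorSums h x Y) := by
  refine ⟨0, ?_⟩
  rintro _ ⟨f, -, rfl⟩
  exact sum_nonpos fun i _ => hle _

theorem card_mul_le_sSup_discriminatorSums {h : ℝ → ℝ} (hle : ∀ t, h t ≤ 0) (x Y : ι → X) :
    Fintype.card ι * h 0 ≤ sSup (discriminatorSums h x Y) :=
  le_csSup (bddAbove_discriminatorSums hle x Y) (card_mul_mem_discriminatorSums h x Y)

theorem sSup_discriminatorSums_of_perm [Nonempty ι] {h : ℝ → ℝ} (hconc : ConcaveOn ℝ univ h)
    (hle : ∀ t, h t ≤ 0) {x Y : ι → X} (σ : Equiv.Perm ι) (hσ : ∀ i, Y i = x (σ i)) :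
    sSup (discriminatorSums h x Y) = Fintype.card ι * h 0 := by
  refine le_antisymm (csSup_le ⟨_, card_mul_mem_discriminatorSums h x Y⟩ ?_)
    (card_mul_le_sSup_discriminatorSums hle x Y)
  rintro _ ⟨f, -, rfl⟩
  refine hconc.sum_le_card_mul_of_sum_eq_zero ?_
  simp only [sum_sub_distrib, hσ, Equiv.sum_comp σ (fun i => f (x i)), sub_self]

theorem card_mul_lt_sSup_discriminatorSums [NormalSpace X] [T1Space X] {h : ℝ → ℝ}
    (hconc : ConcaveOn ℝ univ h) (hle : ∀ t, h t ≤ 0) {t₀ : ℝ} (ht₀ : h 0 < h t₀)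
    {x Y : ι → X} {j : ι} (hj : x j ∉ range Y) :
    Fintype.card ι * h 0 < sSup (discriminatorSums h x Y) := by
  obtain ⟨u, hu_range, hu_xj, hu_Icc⟩ := exists_continuous_zero_one_of_isClosed
    (finite_range Y).isClosed isClosed_singleton (disjoint_singleton_right.mpr hj)
  have hY : ∀ i, t₀ * u (Y i) = 0 := fun i => by simp [hu_range (mem_range_self i)]
  have hterm : ∀ i, h 0 ≤ h (t₀ * u (x i) - t₀ * u (Y i)) := fun i => by
    obtain ⟨hu0, hu1⟩ := hu_Icc (x i)
    have hseg : t₀ * u (x i) ∈ segment ℝ 0 t₀ :=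
      ⟨1 - u (x i), u (x i), by linarith, hu0, by ring, by simp [mul_comm]⟩
    simpa [hY, ht₀.le] using hconc.min_le_of_mem_segment (mem_univ _) (mem_univ _) hseg
  have hterm_j : h 0 < h (t₀ * u (x j) - t₀ * u (Y j)) := by
    simpa [hY, hu_xj rfl] using ht₀
  calc (Fintype.card ι : ℝ) * h 0 = ∑ _i : ι, h 0 := by simp
    _ < ∑ i, h (t₀ * u (x i) - t₀ * u (Y i)) :=
      sum_lt_sum (fun i _ => hterm i) ⟨j, mem_univ j, hterm_j⟩
    _ ≤ sSup (discriminatorSums h x Y) :=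
      le_csSup (bddAbove_discriminatorSums hle x Y) ⟨fun v => t₀ * u v, by fun_prop, rfl⟩

theorem sSup_discriminatorSums_eq_iff [Nonempty ι] [NormalSpace X] [T1Space X] {h : ℝ → ℝ}
    (hconc : ConcaveOn ℝ univ h) (hsup : IsLUB (range h) 0) (h0 : h 0 < 0)
    {x : ι → X} (hx : Injective x) (Y : ι → X) :
    sSup (discriminatorSums h x Y) = Fintype.card ι * h 0 ↔
      ∃ σ : Equiv.Perm ι, ∀ i, Y i = x (σ i) := by
  have hle : ∀ t, h t ≤ 0 := fun t => hsup.1 (mem_range_self t)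
  refine ⟨fun heq => ?_, fun ⟨σ, hσ⟩ => sSup_discriminatorSums_of_perm hconc hle σ hσ⟩
  refine exists_perm_apply_eq_of_range_subset hx fun _ ⟨j, hj⟩ => hj ▸ ?_
  by_contra hxj
  obtain ⟨_, ⟨t₀, rfl⟩, ht₀, -⟩ := hsup.exists_between h0
  exact (card_mul_lt_sSup_discriminatorSums hconc hle ht₀ hxj).ne' heq

end DiscriminatorSums

theorem stmt3_general {d n : ℕ} (hn : 1 ≤ n)
    (x : Fin n → EuclideanSpace ℝ (Fin d)) (hx : Function.Injective x)
    (h : ℝ → ℝ) (hconc : ConcaveOn ℝ Set.univ h)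
    (hsup : IsLUB (Set.range h) 0) (h0 : h 0 < 0) :
    ∀ Y : Fin n → EuclideanSpace ℝ (Fin d),
      h 0 ≤ gR h x Y ∧
      (gR h x Y = h 0 ↔ ∃ σ : Equiv.Perm (Fin n), ∀ i, Y i = x (σ i)) := by
  intro Y
  have : NeZero n := ⟨by omega⟩
  have hn' : (0 : ℝ) < n := by exact_mod_cast hn
  have hgR : gR h x Y = sSup (discriminatorSums h x Y) / n := by
    rw [gR, discriminatorSums, one_div_mul_eq_div]
  have hlow := card_mul_le_sSup_discriminatorSums (fun t => hsup.1 (mem_range_self t)) x Y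
  have hiff := sSup_discriminatorSums_eq_iff hconc hsup h0 hx Y
  rw [Fintype.card_fin] at hlow hiff
  rw [hgR, le_div_iff₀ hn', div_eq_iff hn'.ne', ← hiff, mul_comm]
  exact ⟨hlow, Iff.rfl⟩

theorem stmt3 {d n : ℕ} (hd : 1 ≤ d) (hn : 1 ≤ n)
    (x : Fin n → EuclideanSpace ℝ (Fin d)) (hx : Function.Injective x)
    (h : ℝ → ℝ) (hconc : ConcaveOn ℝ Set.univ h)
    (hsup : IsLUB (Set.range h) 0) (h0 : h 0 < 0) :
    ∀ Y : Fin n → EuclideanSpace ℝ (Fin d),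
      h 0 ≤ gR h x Y ∧
      (gR h x Y = h 0 ↔ ∃ σ : Equiv.Perm (Fin n), ∀ i, Y i = x (σ i)) :=
  stmt3_general hn x hx h hconc hsup h0
end

section
/- Suppose h : ℝ → ℝ is concave with sup_{t∈ℝ} h(t) = 0 and h(0) < 0, and x_1, …, x_n ∈ ℝ^d are distinct. Then every point Y ∈ (ℝ^d)^n is global-min-reachable for the RpGAN loss g_R: there exists a continuous path γ : [0,1] → (ℝ^d)^n with γ(0) = Y, with t ↦ g_R(γ(t)) non-increasing on [0,1], and with γ(1) a global minimizer of g_R. -/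
/-!
Taking the critic `f = 0` shows `g_R ≥ h 0` everywhere, and Jensen's inequality gives
`g_R ≤ h 0` at every rearrangement `x ∘ σ` of the targets, because the differences
`f (x i) - f (x (σ i))` sum to zero; so these are the global minimizers.

If some target `x m` is occupied by no `y j`, then, the other points being fixed, `g_R` takes
the same value at every position `y m ≠ x m` (a critic can be corrected at the isolated point
`x m`) and no larger value at `y m = x m`. Moving `y m` straight to `x m` is therefore a descent
path, and it adds a coordinate with `y m = x m` without destroying the old ones. When no target
is free, `Y` is a rearrangement of `x`.
-/

open scoped BigOperators

/-- A point `Y` is global-min-reachable for `F` if there is a continuous path starting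
at `Y`, along which `F` is non-increasing, ending at a global minimizer of `F`. -/
def GlobalMinReachable {E : Type*} [TopologicalSpace E] (F : E → ℝ) (Y : E) : Prop :=
  ∃ γ : ℝ → E, ContinuousOn γ (Set.Icc 0 1) ∧ γ 0 = Y ∧
    (∀ s ∈ Set.Icc (0 : ℝ) 1, ∀ t ∈ Set.Icc (0 : ℝ) 1, s ≤ t → F (γ t) ≤ F (γ s)) ∧
    (∀ Y', F (γ 1) ≤ F Y')

open Function Set Finset

section CriticValues

variable {ι E : Type*} [Fintype ι] [TopologicalSpace E]

-- `gR h x Y` unfolds to `(1 / n) * sSup (criticValues h x Y)`.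
def criticValues (h : ℝ → ℝ) (x Y : ι → E) : Set ℝ :=
  {s | ∃ f : E → ℝ, Continuous f ∧ s = ∑ i, h (f (x i) - f (Y i))}

variable {h : ℝ → ℝ} {x Y : ι → E}

lemma card_mul_mem_criticValues : (Fintype.card ι : ℝ) * h 0 ∈ criticValues h x Y :=
  ⟨fun _ => 0, continuous_const, by simp⟩

lemma bddAbove_criticValues (hh : BddAbove (range h)) : BddAbove (criticValues h x Y) := by
  obtain ⟨M, hM⟩ := hh
  refine ⟨Fintype.card ι * M, ?_⟩
  rintro _ ⟨f, -, rfl⟩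
  calc ∑ i, h (f (x i) - f (Y i)) ≤ ∑ _ : ι, M := sum_le_sum fun i _ => hM (mem_range_self _)
    _ = Fintype.card ι * M := by simp

lemma criticValues_update_subset [DecidableEq ι] [T1Space E] [CompletelyRegularSpace E]
    (hx : Injective x) {m : ι} (hm : x m ∉ range Y) (p : E) :
    criticValues h x (update Y m p) ⊆ criticValues h x Y := by
  rintro _ ⟨f, hf, rfl⟩
  set K := x '' {m}ᶜ ∪ range Y
  have hK : IsClosed K := ((toFinite _).image x |>.union (finite_range Y)).isClosed
  have hxK : x m ∉ K := by
    rintro (⟨j, hj, hjm⟩ | hmY)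
    · exact hj (hx hjm)
    · exact hm hmY
  obtain ⟨g, hg, hgx, hgK⟩ := CompletelyRegularSpace.completely_regular (x m) K hK hxK
  -- With `c = f (Y m) - f p`, the critic `f - c • g` is `f - c` on `K` and `f` at `x m`.
  refine ⟨fun w => f w - (f (Y m) - f p) * g w, by fun_prop, Finset.sum_congr rfl fun i _ => ?_⟩
  have hYK : g (Y i) = 1 := hgK (Or.inr (mem_range_self i))
  rcases eq_or_ne i m with rfl | hi
  · simp [hgx, hYK]
  · have hxiK : g (x i) = 1 := hgK (Or.inl ⟨i, hi, rfl⟩)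
    simp [hi, hxiK, hYK]

end CriticValues

lemma ConcaveOn.sum_le_card_mul_of_sum_eq_zero_s4 {ι : Type*} {h : ℝ → ℝ}
    (hh : ConcaveOn ℝ univ h) {s : Finset ι} {a : ι → ℝ} (ha : ∑ i ∈ s, a i = 0) :
    ∑ i ∈ s, h (a i) ≤ #s * h 0 := by
  rcases s.eq_empty_or_nonempty with rfl | hs
  · simp
  have hcard : (0 : ℝ) < #s := by exact_mod_cast hs.card_pos
  have jensen := hh.le_map_sum (t := s) (w := fun _ => (#s : ℝ)⁻¹) (p := a)
    (fun _ _ => by positivity) (by simp [hcard.ne']) (fun _ _ => mem_univ _)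
  simp only [smul_eq_mul, ← Finset.mul_sum, ha, mul_zero] at jensen
  rwa [inv_mul_le_iff₀ hcard] at jensen

section Descent

variable {X X' β : Type*} [TopologicalSpace X] [TopologicalSpace X'] [Preorder β]

def DescendsTo (F : X → β) (a b : X) : Prop :=
  ∃ γ : Path a b, Antitone (F ∘ γ)

variable {F : X → β} {a b c : X}

lemma Path.antitone_comp_extend {γ : Path a b} (hγ : Antitone (F ∘ γ)) :
    Antitone (F ∘ γ.extend) :=
  hγ.comp_monotone (monotone_projIcc _)

lemma DescendsTo.refl (F : X → β) (a : X) : DescendsTo F a a :=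
  ⟨Path.refl a, fun _ _ _ => le_rfl⟩

lemma DescendsTo.trans (hab : DescendsTo F a b) (hbc : DescendsTo F b c) : DescendsTo F a c := by
  obtain ⟨γ, hγ⟩ := hab
  obtain ⟨γ', hγ'⟩ := hbc
  refine ⟨γ.trans γ', ?_⟩
  have hA := Path.antitone_comp_extend hγ
  have hB := Path.antitone_comp_extend hγ'
  let g : ℝ → β := fun t =>
    if t ≤ 1 / 2 then F (γ.extend (2 * t)) else F (γ'.extend (2 * t - 1))
  have hg : Antitone g := by
    refine AntitoneOn.Iic_union_Ici (a := 1 / 2) (fun s hs t ht hst => ?_) (fun s hs t ht hst => ?_)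
    · simp only [g, if_pos (mem_Iic.1 hs), if_pos (mem_Iic.1 ht)]
      exact hA (by linarith)
    · have hg_Ici : ∀ u ∈ Ici (1 / 2 : ℝ), g u = F (γ'.extend (2 * u - 1)) := by
        intro u hu
        rcases (mem_Ici.1 hu).eq_or_lt with rfl | hu
        · norm_num [g]
        · simp only [g, if_neg (not_le.2 hu)]
      rw [hg_Ici s hs, hg_Ici t ht]
      exact hB (by linarith)
  have hcomp : F ∘ γ.trans γ' = g ∘ Subtype.val := funext fun _ => apply_ite F _ _ _
  exact hcomp ▸ hg.comp_monotone (Subtype.mono_coe _)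

lemma DescendsTo.map {G : X' → β} {f : X → X'} (hf : Continuous f)
    (hab : DescendsTo (G ∘ f) a b) :
    DescendsTo G (f a) (f b) := by
  obtain ⟨γ, hγ⟩ := hab
  exact ⟨γ.map hf, hγ⟩

lemma DescendsTo.globalMinReachable {F : X → ℝ} (hab : DescendsTo F a b) (hb : ∀ y, F b ≤ F y) :
    GlobalMinReachable F a := by
  obtain ⟨γ, hγ⟩ := hab
  refine ⟨γ.extend, γ.continuous_extend.continuousOn, γ.extend_zero, ?_, by simpa using hb⟩
  exact fun s _ t _ hst => Path.antitone_comp_extend hγ hst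

lemma descendsTo_of_forall_ne {E : Type*} [AddCommGroup E] [Module ℝ E] [TopologicalSpace E]
    [ContinuousAdd E] [ContinuousSMul ℝ E] {G : E → β} {a b : E}
    (hG : ∀ c ≠ b, ∀ p, G p ≤ G c) (hab : a ≠ b) : DescendsTo G a b := by
  refine ⟨Path.segment a b, fun s t hst => ?_⟩
  rcases eq_or_ne (s : ℝ) 1 with hs | hs
  · rw [le_antisymm hst (hs ▸ t.2.2 : (t : ℝ) ≤ s)]
  · exact hG _ (by simpa [AffineMap.lineMap_eq_right_iff, hab] using hs) _

end Descent

lemma exists_eq_comp_perm_or_notMem_range {ι α : Type*} [Finite ι] {x : ι → α}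
    (hx : Injective x) (Y : ι → α) : (∃ σ : Equiv.Perm ι, Y = x ∘ σ) ∨ ∃ m, x m ∉ range Y := by
  by_cases hfree : ∃ m, x m ∉ range Y
  · exact Or.inr hfree
  push Not at hfree
  choose j hj using hfree
  have hj_inj : Injective j := fun a b hab => hx (by rw [← hj, hab, hj])
  let τ := Equiv.ofBijective j hj_inj.bijective_of_finite
  refine Or.inl ⟨τ.symm, funext fun i => ?_⟩
  rw [comp_apply, ← hj (τ.symm i)]
  exact congrArg Y (τ.apply_symm_apply i).symm

lemma ncard_ne_update_lt {ι α : Type*} [Finite ι] [DecidableEq ι] {x Y : ι → α} {m : ι}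
    (hm : Y m ≠ x m) : {j | update Y m (x m) j ≠ x j}.ncard < {j | Y j ≠ x j}.ncard := by
  refine Set.ncard_lt_ncard ((Set.ssubset_iff_of_subset fun j hj => ?_).2 ⟨m, hm, by simp⟩)
    (toFinite _)
  rcases eq_or_ne j m with rfl | hjm
  · simp at hj
  · simpa [hjm] using hj

section Loss

variable {d n : ℕ} {h : ℝ → ℝ} {x : Fin n → EuclideanSpace ℝ (Fin d)}

lemma gR_update_le (hh : BddAbove (range h)) (hx : Injective x)
    {Y : Fin n → EuclideanSpace ℝ (Fin d)} {m : Fin n} (hm : x m ∉ range Y)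
    (p : EuclideanSpace ℝ (Fin d)) :
    gR h x (update Y m p) ≤ gR h x Y :=
  mul_le_mul_of_nonneg_left (csSup_le_csSup (bddAbove_criticValues hh)
    ⟨_, card_mul_mem_criticValues⟩ (criticValues_update_subset hx hm p)) (by positivity)

lemma gR_comp_perm_le (hh : BddAbove (range h)) (hconc : ConcaveOn ℝ univ h)
    (σ : Equiv.Perm (Fin n)) (Y : Fin n → EuclideanSpace ℝ (Fin d)) :
    gR h x (x ∘ σ) ≤ gR h x Y := by
  refine mul_le_mul_of_nonneg_left ?_ (by positivity)
  refine (csSup_le ⟨_, card_mul_mem_criticValues⟩ ?_).trans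
    (le_csSup (bddAbove_criticValues hh) card_mul_mem_criticValues)
  rintro _ ⟨f, -, rfl⟩
  simpa using hconc.sum_le_card_mul_of_sum_eq_zero_s4 (s := Finset.univ)
    (a := fun i => f (x i) - f (x (σ i)))
    (by rw [sum_sub_distrib, Equiv.sum_comp σ fun i => f (x i), sub_self])

lemma descendsTo_update (hh : BddAbove (range h)) (hx : Injective x)
    {Y : Fin n → EuclideanSpace ℝ (Fin d)} {m : Fin n} (hm : x m ∉ range Y) :
    DescendsTo (gR h x) Y (update Y m (x m)) := by
  have hstep : DescendsTo (gR h x ∘ update Y m) (Y m) (x m) := by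
    refine descendsTo_of_forall_ne (fun c hc p => ?_) (fun hYm => hm ⟨m, hYm⟩)
    have hc' : x m ∉ range (update Y m c) := by
      rintro ⟨j, hj⟩
      rcases eq_or_ne j m with rfl | hjm
      · exact hc (by simpa using hj)
      · exact hm ⟨j, by simpa [hjm] using hj⟩
    simpa using gR_update_le hh hx hc' p
  simpa using hstep.map (continuous_const.update m continuous_id)

lemma exists_descendsTo_comp_perm (hh : BddAbove (range h)) (hx : Injective x)
    (Y : Fin n → EuclideanSpace ℝ (Fin d)) :
    ∃ σ : Equiv.Perm (Fin n), DescendsTo (gR h x) Y (x ∘ σ) := by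
  rcases exists_eq_comp_perm_or_notMem_range hx Y with ⟨σ, rfl⟩ | ⟨m, hm⟩
  · exact ⟨σ, .refl _ _⟩
  · obtain ⟨σ, hσ⟩ := exists_descendsTo_comp_perm hh hx (update Y m (x m))
    exact ⟨σ, (descendsTo_update hh hx hm).trans hσ⟩
termination_by {j | Y j ≠ x j}.ncard
decreasing_by exact ncard_ne_update_lt fun hYm => hm ⟨m, hYm⟩

end Loss

theorem stmt4_general {d n : ℕ}
    (x : Fin n → EuclideanSpace ℝ (Fin d)) (hx : Function.Injective x)
    (h : ℝ → ℝ) (hconc : ConcaveOn ℝ Set.univ h)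
    (hsup : IsLUB (Set.range h) 0) :
    ∀ Y : Fin n → EuclideanSpace ℝ (Fin d),
      GlobalMinReachable (gR h x) Y := by
  intro Y
  obtain ⟨σ, hσ⟩ := exists_descendsTo_comp_perm hsup.bddAbove hx Y
  exact hσ.globalMinReachable (gR_comp_perm_le hsup.bddAbove hconc σ)

theorem stmt4 {d n : ℕ} (hd : 1 ≤ d) (hn : 1 ≤ n)
    (x : Fin n → EuclideanSpace ℝ (Fin d)) (hx : Function.Injective x)
    (h : ℝ → ℝ) (hconc : ConcaveOn ℝ Set.univ h)
    (hsup : IsLUB (Set.range h) 0) (h0 : h 0 < 0) :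
    ∀ Y : Fin n → EuclideanSpace ℝ (Fin d),
      GlobalMinReachable (gR h x) Y :=
  stmt4_general x hx h hconc hsup
end

section
/- Let x_1, …, x_n ∈ ℝ^d be distinct and define the RS-GAN loss φ_RS(Y, X) = sup over continuous f : ℝ^d → ℝ of (1/n) · Σ_{i=1}^n log(1/(1 + exp(f(y_i) − f(x_i)))). If Y ∈ (ℝ^d)^n is not a global minimizer of Y ↦ φ_RS(Y, X), then there exist Ŷ ∈ (ℝ^d)^n and a continuous path γ : [0,1] → (ℝ^d)^n with γ(0) = Y, γ(1) = Ŷ, such that t ↦ φ_RS(γ(t), X) is non-increasing on [0,1] and φ_RS(Ŷ, X) ≤ φ_RS(Y, X) − (log 2)/n. -/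
/-!
Write `i → j` when `y_i = x_j`; since the `x_j` are distinct this is a partial map on the indices.
For any discriminator `f`, the per-sample loss is `-log (1 + eˢ) ≤ -log 2 - s / 2` with
`s = f(y_i) - f(x_i)`, and these `s` sum to zero over the indices lying on cycles, while all other
losses are `≤ 0`. A discriminator that is constant on cycles and drops by `T` along every other
index attains this bound up to `n e⁻ᵀ`. Hence `φ_RS(Y, X) = -m(Y) log 2 / n`, where `m(Y)` counts
the cyclic indices. If `Y` is not a minimiser, some index `i` is not cyclic; sliding `y_i` along a
segment to the nearest `x_j` among the indices `j` whose orbit reaches `i` keeps all cycles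
until the endpoint, where a new cycle through `i` closes.
-/

open scoped BigOperators

/-- The RS-GAN loss
φ_RS(Y, X) = sup over continuous f of (1/n) · Σ_i log(1/(1 + exp(f(y_i) − f(x_i)))). -/
noncomputable def phiRS {d n : ℕ} (x Y : Fin n → EuclideanSpace ℝ (Fin d)) : ℝ :=
  sSup {s : ℝ | ∃ f : EuclideanSpace ℝ (Fin d) → ℝ, Continuous f ∧
    s = (1 / (n : ℝ)) * ∑ i, Real.log (1 / (1 + Real.exp (f (Y i) - f (x i))))}

open Finset Function Relation

namespace RSGAN

section Relation

variable {α : Type*} {r : α → α → Prop} {i a b : α}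

def eraseOut (r : α → α → Prop) (i : α) : α → α → Prop := fun a b => a ≠ i ∧ r a b

lemma eraseOut_le : eraseOut r i ≤ r := fun _ _ => And.right

lemma reflTransGen_eraseOut (h : ReflTransGen r a i) : ReflTransGen (eraseOut r i) a i := by
  induction h using ReflTransGen.head_induction_on with
  | refl => rfl
  | @head a c hac _ ih =>
    by_cases ha : a = i
    · rw [ha]
    · exact .head ⟨ha, hac⟩ ih

lemma reflTransGen_eraseOut_or (h : ReflTransGen r a b) :
    ReflTransGen (eraseOut r i) a b ∨ ReflTransGen r a i ∧ ReflTransGen r i b := by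
  induction h using ReflTransGen.head_induction_on with
  | refl => exact .inl .refl
  | @head a c hac hcb ih =>
    rcases ih with hcb' | ⟨hci, hib⟩
    · by_cases ha : a = i
      · exact .inr ⟨ha ▸ .refl, ha ▸ .head hac hcb⟩
      · exact .inl (.head ⟨ha, hac⟩ hcb')
    · exact .inr ⟨.head hac hci, hib⟩

lemma transGen_self_iff_eraseOut :
    TransGen r i i ↔ ∃ w, r i w ∧ ReflTransGen (eraseOut r i) w i := by
  rw [TransGen.head'_iff]
  exact exists_congr fun w => and_congr_right fun _ =>
    ⟨reflTransGen_eraseOut, ReflTransGen.mono eraseOut_le _ _⟩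

lemma transGen_eraseOut_self_iff (hi : ¬TransGen r i i) :
    TransGen (eraseOut r i) a a ↔ TransGen r a a := by
  refine ⟨TransGen.mono eraseOut_le _ _, fun h => ?_⟩
  have ha : a ≠ i := by rintro rfl; exact hi h
  obtain ⟨c, hac, hca⟩ := TransGen.head'_iff.1 h
  rcases reflTransGen_eraseOut_or (i := i) hca with hca' | ⟨hci, hia⟩
  · exact .head' ⟨ha, hac⟩ hca'
  · exact (hi (TransGen.trans_right hia (.head' hac hci))).elim

open Classical in
noncomputable def cyclicPts [Fintype α] (r : α → α → Prop) : Finset α :=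
  univ.filter fun a => TransGen r a a

variable [Fintype α]

@[simp] lemma mem_cyclicPts : a ∈ cyclicPts r ↔ TransGen r a a := by
  simp [cyclicPts]

lemma cyclicPts_eraseOut (hi : i ∉ cyclicPts r) : cyclicPts (eraseOut r i) = cyclicPts r := by
  ext a
  simp only [mem_cyclicPts]
  exact transGen_eraseOut_self_iff (mem_cyclicPts.not.1 hi)

lemma cyclicPts_eraseOut_ssubset (hi : i ∈ cyclicPts r) :
    cyclicPts (eraseOut r i) ⊂ cyclicPts r := by
  refine (ssubset_iff_of_subset fun a ha => ?_).2 ⟨i, hi, ?_⟩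
  · exact mem_cyclicPts.2 (TransGen.mono eraseOut_le _ _ (mem_cyclicPts.1 ha))
  · rw [mem_cyclicPts, TransGen.head'_iff]
    rintro ⟨_, ⟨hii, _⟩, _⟩
    exact hii rfl

/-- Along a cycle every edge `f a = g b` has both ends on the cycle, so `f` and `g` take the same
values on the cyclic points. -/
lemma image_cyclicPts {β : Type*} [DecidableEq β] (f g : α → β) :
    (cyclicPts fun a b => f a = g b).image f = (cyclicPts fun a b => f a = g b).image g := by
  ext y
  simp only [mem_image, mem_cyclicPts]
  constructor
  · rintro ⟨a, ha, rfl⟩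
    obtain ⟨b, hab, hba⟩ := TransGen.head'_iff.1 ha
    exact ⟨b, TransGen.tail' hba hab, hab.symm⟩
  · rintro ⟨b, hb, rfl⟩
    obtain ⟨a, hba, hab⟩ := TransGen.tail'_iff.1 hb
    exact ⟨a, .head' hab hba, hab⟩

open Classical in
noncomputable def reachFinset (r : α → α → Prop) (a : α) : Finset α :=
  univ.filter (ReflTransGen r a)

@[simp] lemma mem_reachFinset {c : α} : c ∈ reachFinset r a ↔ ReflTransGen r a c := by
  simp [reachFinset]

lemma mem_reachFinset_iff_mem_cyclicPts (hr : Relator.RightUnique r) (hab : r a b) :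
    a ∈ reachFinset r b ↔ a ∈ cyclicPts r := by
  rw [mem_reachFinset, mem_cyclicPts, TransGen.head'_iff]
  exact ⟨fun h => ⟨b, hab, h⟩, fun ⟨d, had, hda⟩ => hr had hab ▸ hda⟩

variable [DecidableEq α]

lemma reachFinset_eq_insert (hr : Relator.RightUnique r) (hab : r a b) :
    reachFinset r a = insert a (reachFinset r b) := by
  ext c
  simp only [mem_insert, mem_reachFinset, ReflTransGen.cases_head_iff (a := a), eq_comm (a := a)]
  exact or_congr_right ⟨fun ⟨d, had, hdc⟩ => hr hab had ▸ hdc, fun h => ⟨b, hab, h⟩⟩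

lemma card_reachFinset_of_mem_cyclicPts (hr : Relator.RightUnique r) (hab : r a b)
    (ha : a ∈ cyclicPts r) : #(reachFinset r a) = #(reachFinset r b) := by
  rw [reachFinset_eq_insert hr hab,
    card_insert_of_mem ((mem_reachFinset_iff_mem_cyclicPts hr hab).2 ha)]

lemma card_reachFinset_of_notMem_cyclicPts (hr : Relator.RightUnique r) (hab : r a b)
    (ha : a ∉ cyclicPts r) : #(reachFinset r a) = #(reachFinset r b) + 1 := by
  rw [reachFinset_eq_insert hr hab,
    card_insert_of_notMem ((mem_reachFinset_iff_mem_cyclicPts hr hab).not.2 ha)]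

end Relation

section Loss

noncomputable def rsLoss (t : ℝ) : ℝ := Real.log (1 / (1 + Real.exp t))

lemma rsLoss_eq (t : ℝ) : rsLoss t = -Real.log (1 + Real.exp t) := by
  rw [rsLoss, one_div, Real.log_inv]

lemma rsLoss_nonpos (t : ℝ) : rsLoss t ≤ 0 := by
  rw [rsLoss_eq, neg_nonpos]
  exact Real.log_nonneg (by linarith [Real.exp_pos t])

lemma rsLoss_zero : rsLoss 0 = -Real.log 2 := by
  rw [rsLoss_eq, Real.exp_zero, one_add_one_eq_two]

lemma rsLoss_le (t : ℝ) : rsLoss t ≤ -Real.log 2 - t / 2 := by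
  have hamgm : 2 * Real.exp (t / 2) ≤ 1 + Real.exp t := by
    have : Real.exp t = Real.exp (t / 2) ^ 2 := by rw [← Real.exp_nat_mul]; ring_nf
    nlinarith [sq_nonneg (1 - Real.exp (t / 2))]
  have := Real.log_le_log (by positivity) hamgm
  rw [Real.log_mul two_ne_zero (Real.exp_ne_zero _), Real.log_exp] at this
  rw [rsLoss_eq]
  linarith

lemma neg_exp_le_rsLoss (t : ℝ) : -Real.exp t ≤ rsLoss t := by
  rw [rsLoss_eq, neg_le_neg_iff]
  linarith [Real.log_le_sub_one_of_pos (by positivity : 0 < 1 + Real.exp t)]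

end Loss

lemma exists_continuous_eqOn_of_finite {X : Type*} [TopologicalSpace X] [NormalSpace X]
    [T1Space X] {s : Set X} (hs : s.Finite) (v : X → ℝ) :
    ∃ f : X → ℝ, Continuous f ∧ Set.EqOn f v s := by
  have := hs.to_subtype
  obtain ⟨g, hg⟩ := ContinuousMap.exists_restrict_eq hs.isClosed
    ⟨fun p : s => v p, continuous_of_discreteTopology⟩
  exact ⟨g, g.continuous, fun p hp => DFunLike.congr_fun hg ⟨p, hp⟩⟩

section Configuration

variable {α E : Type*}

/-- `matchRel x Y a b` says that the generated point `Y a` sits on the data point `x b`. -/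
def matchRel (x Y : α → E) : α → α → Prop := fun a b => Y a = x b

lemma rightUnique_matchRel {x : α → E} (hx : Injective x) (Y : α → E) :
    Relator.RightUnique (matchRel x Y) :=
  fun _ _ _ hb hc => hx (hb.symm.trans hc)

variable [Fintype α]

lemma sum_cyclicPts_matchRel {x : α → E} (hx : Injective x) (Y : α → E) (φ : E → ℝ) :
    ∑ a ∈ cyclicPts (matchRel x Y), φ (Y a) = ∑ a ∈ cyclicPts (matchRel x Y), φ (x a) := by
  classical
  have himage := image_cyclicPts Y x
  have hY : Set.InjOn Y (cyclicPts (matchRel x Y)) := by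
    rw [← card_image_iff]
    exact (congrArg card himage).trans (card_image_of_injective _ hx)
  rw [← sum_image hY, ← sum_image hx.injOn]
  exact congrArg (∑ p ∈ ·, φ p) himage

lemma sum_rsLoss_le {x : α → E} (hx : Injective x) (Y : α → E) (f : E → ℝ) :
    ∑ a, rsLoss (f (Y a) - f (x a)) ≤ -(#(cyclicPts (matchRel x Y)) * Real.log 2) := by
  classical
  set C := cyclicPts (matchRel x Y)
  calc ∑ a, rsLoss (f (Y a) - f (x a))
      = ∑ a ∈ C, rsLoss (f (Y a) - f (x a)) + ∑ a ∈ Cᶜ, rsLoss (f (Y a) - f (x a)) :=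
        (sum_add_sum_compl C _).symm
    _ ≤ ∑ a ∈ C, (-Real.log 2 - (f (Y a) - f (x a)) / 2) + 0 :=
        add_le_add (sum_le_sum fun a _ => rsLoss_le _) (sum_nonpos fun a _ => rsLoss_nonpos _)
    _ = -(#C * Real.log 2) := by
        rw [add_zero, sum_sub_distrib, ← sum_div, sum_sub_distrib, sum_cyclicPts_matchRel hx,
          sub_self, zero_div, sub_zero, sum_const, nsmul_eq_mul, mul_neg]

/-- The discriminator takes the value `T · #(reachFinset (matchRel x Y) a)` at `x a` and `0` at the
other points `Y a`. -/
lemma exists_continuous_sum_rsLoss_ge [TopologicalSpace E] [NormalSpace E] [T1Space E]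
    {x : α → E} (hx : Injective x) (Y : α → E) {T : ℝ} (hT : 0 ≤ T) :
    ∃ f : E → ℝ, Continuous f ∧
      -(#(cyclicPts (matchRel x Y)) * Real.log 2) - Fintype.card α * Real.exp (-T) ≤
        ∑ a, rsLoss (f (Y a) - f (x a)) := by
  classical
  set r := matchRel x Y
  set C := cyclicPts r
  have hr := rightUnique_matchRel hx Y
  obtain ⟨f, hf, hfv⟩ := exists_continuous_eqOn_of_finite
    ((Set.finite_range x).union (Set.finite_range Y)) (extend x (fun a => T * #(reachFinset r a)) 0)
  have hfx (a : α) : f (x a) = T * #(reachFinset r a) :=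
    (hfv (Or.inl ⟨a, rfl⟩)).trans (hx.extend_apply _ _ _)
  have hcyc (a : α) (ha : a ∈ C) : f (Y a) - f (x a) = 0 := by
    obtain ⟨b, hab, -⟩ := TransGen.head'_iff.1 (mem_cyclicPts.1 ha)
    rw [show Y a = x b from hab, hfx, hfx, card_reachFinset_of_mem_cyclicPts hr hab ha, sub_self]
  have hacyc (a : α) (ha : a ∉ C) : f (Y a) - f (x a) ≤ -T := by
    by_cases hYa : ∃ b, x b = Y a
    · obtain ⟨b, hb⟩ := hYa
      rw [← hb, hfx, hfx, card_reachFinset_of_notMem_cyclicPts hr hb.symm ha]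
      push_cast
      linarith
    · have hreach : 1 ≤ #(reachFinset r a) := card_pos.2 ⟨a, mem_reachFinset.2 .refl⟩
      rw [hfv (Or.inr ⟨a, rfl⟩), extend_apply' _ _ _ hYa, hfx, Pi.zero_apply, zero_sub,
        neg_le_neg_iff]
      exact le_mul_of_one_le_right hT (by exact_mod_cast hreach)
  refine ⟨f, hf, ?_⟩
  calc -(#C * Real.log 2) - Fintype.card α * Real.exp (-T)
      = ∑ a, ((if a ∈ C then -Real.log 2 else 0) - Real.exp (-T)) := by
        rw [sum_sub_distrib, sum_ite_mem, univ_inter, sum_const, sum_const, card_univ,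
          nsmul_eq_mul, nsmul_eq_mul, mul_neg]
    _ ≤ ∑ a, rsLoss (f (Y a) - f (x a)) := by
        refine sum_le_sum fun a _ => ?_
        by_cases ha : a ∈ C
        · rw [if_pos ha, hcyc a ha, rsLoss_zero]
          linarith [Real.exp_pos (-T)]
        · rw [if_neg ha, zero_sub]
          exact (neg_le_neg (Real.exp_le_exp.2 (hacyc a ha))).trans (neg_exp_le_rsLoss _)

end Configuration

section PhiRS

variable {d n : ℕ} {x : Fin n → EuclideanSpace ℝ (Fin d)}

lemma phiRS_eq (hx : Injective x) (Y : Fin n → EuclideanSpace ℝ (Fin d)) :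
    phiRS x Y = -(#(cyclicPts (matchRel x Y)) * Real.log 2) / n := by
  set m := #(cyclicPts (matchRel x Y))
  refine IsLUB.csSup_eq ⟨?_, fun b hb => ?_⟩ ⟨_, fun _ => 0, continuous_const, rfl⟩
  · rintro s ⟨f, -, rfl⟩
    exact (mul_le_mul_of_nonneg_left (sum_rsLoss_le hx Y f) (by positivity)).trans_eq
      (one_div_mul_eq_div _ _)
  · have hlim : Filter.Tendsto (fun T => (1 / (n : ℝ)) * (-(m * Real.log 2) - n * Real.exp (-T)))
        Filter.atTop (nhds (-(m * Real.log 2) / n)) := by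
      have := ((tendsto_const_nhds (x := -(m * Real.log 2))).sub
        (Real.tendsto_exp_neg_atTop_nhds_zero.const_mul (n : ℝ))).const_mul (1 / (n : ℝ))
      simpa [div_eq_inv_mul] using this
    refine le_of_tendsto hlim (Filter.eventually_atTop.2 ⟨0, fun T hT => ?_⟩)
    obtain ⟨f, hf, hfT⟩ := exists_continuous_sum_rsLoss_ge hx Y hT
    refine le_trans ?_ (hb ⟨f, hf, rfl⟩)
    rw [Fintype.card_fin] at hfT
    exact mul_le_mul_of_nonneg_left hfT (by positivity)

lemma phiRS_le_sub_of_card_add_le (hx : Injective x) {Y₁ Y₂ : Fin n → EuclideanSpace ℝ (Fin d)}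
    {k : ℕ} (h : #(cyclicPts (matchRel x Y₁)) + k ≤ #(cyclicPts (matchRel x Y₂))) :
    phiRS x Y₂ ≤ phiRS x Y₁ - k * Real.log 2 / n := by
  rw [phiRS_eq hx, phiRS_eq hx, div_sub_div_same, ← neg_add', ← add_mul]
  gcongr
  exact_mod_cast h

end PhiRS

section Descent

variable {α E : Type*} [DecidableEq α] {x : α → E} {Y : α → E} {i : α}

lemma eraseOut_matchRel_update (Y : α → E) (i : α) (z : E) :
    eraseOut (matchRel x (update Y i z)) i = eraseOut (matchRel x Y) i := by
  funext a b
  exact propext (and_congr_right fun ha => by rw [matchRel, matchRel, update_of_ne ha])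

variable [Fintype α]

lemma mem_cyclicPts_matchRel_update_iff {z : E} :
    i ∈ cyclicPts (matchRel x (update Y i z)) ↔
      ∃ w, z = x w ∧ ReflTransGen (eraseOut (matchRel x Y) i) w i := by
  rw [mem_cyclicPts, transGen_self_iff_eraseOut, eraseOut_matchRel_update]
  simp only [matchRel, update_self]

lemma cyclicPts_matchRel_update (hY : i ∉ cyclicPts (matchRel x Y)) {z : E}
    (hz : i ∉ cyclicPts (matchRel x (update Y i z))) :
    cyclicPts (matchRel x (update Y i z)) = cyclicPts (matchRel x Y) := by
  rw [← cyclicPts_eraseOut hz, eraseOut_matchRel_update, cyclicPts_eraseOut hY]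

lemma card_cyclicPts_matchRel_lt_update (hY : i ∉ cyclicPts (matchRel x Y)) {z : E}
    (hz : i ∈ cyclicPts (matchRel x (update Y i z))) :
    #(cyclicPts (matchRel x Y)) < #(cyclicPts (matchRel x (update Y i z))) := by
  rw [← cyclicPts_eraseOut hY, ← eraseOut_matchRel_update Y i z]
  exact card_lt_card (cyclicPts_eraseOut_ssubset hz)

/-- Move `Y i` straight to the nearest data point `x j` among the indices `j` whose orbit runs
into `i`: no intermediate position closes a cycle through `i`, and the endpoint does. -/
lemma exists_path_card_cyclicPts [NormedAddCommGroup E] [NormedSpace ℝ E]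
    (hi : i ∉ cyclicPts (matchRel x Y)) :
    ∃ γ : ℝ → α → E, Continuous γ ∧ γ 0 = Y ∧
      MonotoneOn (fun t => #(cyclicPts (matchRel x (γ t)))) (Set.Icc 0 1) ∧
      #(cyclicPts (matchRel x Y)) < #(cyclicPts (matchRel x (γ 1))) := by
  classical
  set basin := univ.filter fun w => ReflTransGen (eraseOut (matchRel x Y) i) w i
  have hbasin {w : α} : w ∈ basin ↔ ReflTransGen (eraseOut (matchRel x Y) i) w i := by
    simp [basin]
  obtain ⟨j, hj, hjmin⟩ := basin.exists_min_image (fun w => dist (x w) (Y i))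
    ⟨i, hbasin.2 .refl⟩
  have hYj : Y i ≠ x j := fun h =>
    hi (update_eq_self i Y ▸ mem_cyclicPts_matchRel_update_iff.2 ⟨j, h, hbasin.1 hj⟩)
  set γ : ℝ → α → E := fun t => update Y i (AffineMap.lineMap (Y i) (x j) t)
  have hγ (t : ℝ) (ht : t ∈ Set.Ico 0 1) :
      cyclicPts (matchRel x (γ t)) = cyclicPts (matchRel x Y) := by
    refine cyclicPts_matchRel_update hi (mt mem_cyclicPts_matchRel_update_iff.1 ?_)
    rintro ⟨w, hw, hwi⟩
    have hlt : dist (x w) (Y i) < dist (x j) (Y i) := by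
      rw [← hw, dist_lineMap_left, Real.norm_of_nonneg ht.1, dist_comm]
      exact mul_lt_of_lt_one_left (dist_pos.2 hYj.symm) ht.2
    exact (hjmin w (hbasin.2 hwi)).not_gt hlt
  have hγ1 : #(cyclicPts (matchRel x Y)) < #(cyclicPts (matchRel x (γ 1))) :=
    card_cyclicPts_matchRel_lt_update hi
      (mem_cyclicPts_matchRel_update_iff.2 ⟨j, AffineMap.lineMap_apply_one _ _, hbasin.1 hj⟩)
  refine ⟨γ, continuous_const.update i (continuous_const.lineMap continuous_const continuous_id),
    by simp [γ], fun s hs t ht hst => ?_, hγ1⟩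
  dsimp only
  rcases ht.2.lt_or_eq with ht1 | rfl
  · rw [hγ s ⟨hs.1, hst.trans_lt ht1⟩, hγ t ⟨ht.1, ht1⟩]
  · rcases hs.2.lt_or_eq with hs1 | rfl
    · rw [hγ s ⟨hs.1, hs1⟩]
      exact hγ1.le
    · exact le_rfl

end Descent

end RSGAN

open RSGAN

theorem stmt12_general {d n : ℕ}
    (x : Fin n → EuclideanSpace ℝ (Fin d)) (hx : Function.Injective x) :
    ∀ Y : Fin n → EuclideanSpace ℝ (Fin d),
      ¬ (∀ Y' : Fin n → EuclideanSpace ℝ (Fin d), phiRS x Y ≤ phiRS x Y') →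
      ∃ (Yhat : Fin n → EuclideanSpace ℝ (Fin d))
        (γ : ℝ → (Fin n → EuclideanSpace ℝ (Fin d))),
        ContinuousOn γ (Set.Icc 0 1) ∧ γ 0 = Y ∧ γ 1 = Yhat ∧
        (∀ s ∈ Set.Icc (0 : ℝ) 1, ∀ t ∈ Set.Icc (0 : ℝ) 1, s ≤ t →
          phiRS x (γ t) ≤ phiRS x (γ s)) ∧
        phiRS x Yhat ≤ phiRS x Y - Real.log 2 / n := by
  intro Y hY
  obtain ⟨Y', hY'⟩ := not_forall.1 hY
  have hlt : #(cyclicPts (matchRel x Y)) < #(univ : Finset (Fin n)) := calc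
    #(cyclicPts (matchRel x Y)) < #(cyclicPts (matchRel x Y')) :=
      not_le.1 fun h => hY' (by simpa using phiRS_le_sub_of_card_add_le hx (k := 0) h)
    _ ≤ #univ := card_le_univ _
  obtain ⟨i, -, hi⟩ := exists_mem_notMem_of_card_lt_card hlt
  obtain ⟨γ, hγ, hγ0, hmono, hγ1⟩ := exists_path_card_cyclicPts hi
  refine ⟨γ 1, γ, hγ.continuousOn, hγ0, rfl, fun s hs t ht hst => ?_, ?_⟩
  · simpa using phiRS_le_sub_of_card_add_le hx (k := 0) (hmono hs ht hst)
  · simpa using phiRS_le_sub_of_card_add_le hx (k := 1) hγ1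

theorem stmt12 {d n : ℕ} (hd : 1 ≤ d) (hn : 1 ≤ n)
    (x : Fin n → EuclideanSpace ℝ (Fin d)) (hx : Function.Injective x) :
    ∀ Y : Fin n → EuclideanSpace ℝ (Fin d),
      ¬ (∀ Y' : Fin n → EuclideanSpace ℝ (Fin d), phiRS x Y ≤ phiRS x Y') →
      ∃ (Yhat : Fin n → EuclideanSpace ℝ (Fin d))
        (γ : ℝ → (Fin n → EuclideanSpace ℝ (Fin d))),
        ContinuousOn γ (Set.Icc 0 1) ∧ γ 0 = Y ∧ γ 1 = Yhat ∧
        (∀ s ∈ Set.Icc (0 : ℝ) 1, ∀ t ∈ Set.Icc (0 : ℝ) 1, s ≤ t →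
          phiRS x (γ t) ≤ phiRS x (γ s)) ∧
        phiRS x Yhat ≤ phiRS x Y - Real.log 2 / n :=
  stmt12_general x hx
end
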